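/- In a q-matroid M=(E,ρ), if F is a flat then cyc(F) is a flat, and if O is an open space then cl(O) is open. Consequently, for every subspace V, cl(cyc(V)) ≤ cyc(cl(V)) and both spaces are cyclic flats. -/

import Mathlib

open Submodule Module

namespace QM

variable (F : Type*) {E : Type*} [Field F] [AddCommGroup E] [Module F E]

/-- The rank axioms (R1)-(R3) of a q-matroid. -/
def IsRkFn (ρ : Submodule F E → ℕ) : Prop :=
  (∀ V : Submodule F E, ρ V ≤ finrank F V) ∧
  (∀ ⦃V W : Submodule F E⦄, V ≤ W → ρ V ≤ ρ W) ∧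
  (∀ V W : Submodule F E, ρ (V ⊔ W) + ρ (V ⊓ W) ≤ ρ V + ρ W)

variable {F}

/-- Independent spaces. -/
def Indep (ρ : Submodule F E → ℕ) (V : Submodule F E) : Prop := ρ V = finrank F V

/-- Circuits: dependent spaces all of whose proper subspaces are independent. -/
def IsCircuit (ρ : Submodule F E → ℕ) (C : Submodule F E) : Prop :=
  ¬ Indep ρ C ∧ ∀ D : Submodule F E, D < C → Indep ρ D

/-- Open spaces: sums of circuits. -/
def IsOpenSp (ρ : Submodule F E → ℕ) (V : Submodule F E) : Prop :=
  ∃ S : Set (Submodule F E), (∀ C ∈ S, IsCircuit ρ C) ∧ V = sSup S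

/-- The cyclic core: the sum of all circuits contained in `V`. -/
def cyc (ρ : Submodule F E → ℕ) (V : Submodule F E) : Submodule F E :=
  sSup {C : Submodule F E | IsCircuit ρ C ∧ C ≤ V}

/-- The closure operator: the sum of all `⟨x⟩` with `ρ(V + ⟨x⟩) = ρ V`. -/
def cl (ρ : Submodule F E → ℕ) (V : Submodule F E) : Submodule F E :=
  sSup {W : Submodule F E | ∃ x : E, ρ (V ⊔ span F {x}) = ρ V ∧ W = span F {x}}

/-- Flats. -/
def IsFlat (ρ : Submodule F E → ℕ) (V : Submodule F E) : Prop :=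
  ∀ x : E, x ∉ V → ρ V < ρ (V ⊔ span F {x})

/-- Cyclic flats. -/
def CyclicFlat (ρ : Submodule F E → ℕ) (V : Submodule F E) : Prop :=
  IsFlat ρ V ∧ IsOpenSp ρ V

end QM

/-!
Everything rests on an exchange property: if `x ∉ V` lies in `cl V`, extending an independent
subspace of `V` of full rank by `x` gives a dependent space, and a minimal dependent subspace of it
is a circuit `C ≤ V + ⟨x⟩` not contained in `V`, so that `x ∈ V + C`.

Let `L` be a flat and `x ∉ cyc L` with `ρ (cyc L + ⟨x⟩) = ρ (cyc L)`. If `x ∈ L`, that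
circuit lies in `L`, hence in `cyc L`, which would put `x` in `cyc L`; if `x ∉ L`, submodularity
would give `ρ (L + ⟨x⟩) = ρ L`. For any `V` the exchange property gives `cl V = V + cyc (cl V)`,
so the closure of an open space is a sum of two open spaces. Finally `cl (cyc V)` is an open
space inside `cl V`, hence inside `cyc (cl V)`.
-/

namespace QM

variable {F E : Type*} [Field F] [AddCommGroup E] [Module F E] {ρ : Submodule F E → ℕ}
  {C D O U V W X : Submodule F E} {x : E}

theorem IsRkFn.le_finrank (hρ : IsRkFn F ρ) (V : Submodule F E) : ρ V ≤ finrank F V :=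
  hρ.1 V

theorem IsRkFn.mono (hρ : IsRkFn F ρ) (h : V ≤ W) : ρ V ≤ ρ W :=
  hρ.2.1 h

theorem IsRkFn.submodular (hρ : IsRkFn F ρ) (V W : Submodule F E) :
    ρ (V ⊔ W) + ρ (V ⊓ W) ≤ ρ V + ρ W :=
  hρ.2.2 V W

theorem IsRkFn.rank_bot (hρ : IsRkFn F ρ) : ρ ⊥ = 0 :=
  Nat.le_zero.mp (by simpa using hρ.le_finrank ⊥)

theorem IsRkFn.indep_bot (hρ : IsRkFn F ρ) : Indep ρ ⊥ := by
  simp [Indep, hρ.rank_bot]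

theorem IsRkFn.rank_sup_add_le (hρ : IsRkFn F ρ) (h : V ≤ W) (X : Submodule F E) :
    ρ (W ⊔ X) + ρ V ≤ ρ W + ρ (V ⊔ X) := by
  have hsub := hρ.submodular W (V ⊔ X)
  rw [← sup_assoc, sup_eq_left.2 h] at hsub
  have hinf := hρ.mono (le_inf h le_sup_left : V ≤ W ⊓ (V ⊔ X))
  omega

theorem IsRkFn.rank_sup_eq_of_le (hρ : IsRkFn F ρ) (hUX : U ≤ X) (h : ρ (V ⊔ X) = ρ V) :
    ρ (V ⊔ U) = ρ V :=
  le_antisymm (h ▸ hρ.mono (sup_le_sup_left hUX V)) (hρ.mono le_sup_left)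

theorem IsRkFn.rank_sup_sup_eq (hρ : IsRkFn F ρ) (hU : ρ (V ⊔ U) = ρ V)
    (hX : ρ (V ⊔ X) = ρ V) : ρ (V ⊔ (U ⊔ X)) = ρ V := by
  have hle := hρ.rank_sup_add_le (le_sup_left : V ≤ V ⊔ U) X
  rw [sup_assoc] at hle
  have hmono := hρ.mono (le_sup_left : V ≤ V ⊔ (U ⊔ X))
  omega

theorem cl_eq_span (ρ : Submodule F E → ℕ) (V : Submodule F E) :
    cl ρ V = span F {x | ρ (V ⊔ span F {x}) = ρ V} := by
  refine le_antisymm (sSup_le ?_) (span_le.2 fun x hx => ?_)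
  · rintro _ ⟨x, hx, rfl⟩
    exact span_mono (Set.singleton_subset_iff.2 hx)
  · exact (le_sSup ⟨x, hx, rfl⟩ : span F {x} ≤ cl ρ V) (mem_span_singleton_self x)

theorem IsRkFn.mem_cl_iff (hρ : IsRkFn F ρ) : x ∈ cl ρ V ↔ ρ (V ⊔ span F {x}) = ρ V := by
  refine ⟨fun hx => ?_, fun hx => cl_eq_span ρ V ▸ subset_span hx⟩
  rw [cl_eq_span] at hx
  induction hx using Submodule.span_induction with
  | mem y hy => exact hy
  | zero => simp
  | add a b _ _ ha hb =>
    refine hρ.rank_sup_eq_of_le ?_ (hρ.rank_sup_sup_eq ha hb)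
    exact (span_singleton_le_iff_mem _ _).2
      (add_mem_sup (mem_span_singleton_self a) (mem_span_singleton_self b))
  | smul c a _ ha => exact hρ.rank_sup_eq_of_le (span_singleton_smul_le F c a) ha

theorem IsRkFn.le_cl (hρ : IsRkFn F ρ) (V : Submodule F E) : V ≤ cl ρ V := fun x hx =>
  hρ.mem_cl_iff.2 (by rw [sup_eq_left.2 ((span_singleton_le_iff_mem _ _).2 hx)])

theorem IsRkFn.sup_span_singleton_le_cl (hρ : IsRkFn F ρ) (hx : x ∈ cl ρ V) :
    V ⊔ span F {x} ≤ cl ρ V :=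
  sup_le (hρ.le_cl V) ((span_singleton_le_iff_mem _ _).2 hx)

theorem IsRkFn.cl_mono (hρ : IsRkFn F ρ) (h : V ≤ W) : cl ρ V ≤ cl ρ W := fun x hx => by
  rw [hρ.mem_cl_iff] at hx ⊢
  have hle := hρ.rank_sup_add_le h (span F {x})
  have hmono := hρ.mono (le_sup_left : W ≤ W ⊔ span F {x})
  omega

section FiniteDimensional

variable [FiniteDimensional F E]

theorem IsRkFn.rank_sup_eq_of_le_cl (hρ : IsRkFn F ρ) (hU : U ≤ cl ρ V) :
    ρ (V ⊔ U) = ρ V := by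
  suffices ∀ U' (hU' : U'.FG), U' ≤ cl ρ V → ρ (V ⊔ U') = ρ V from
    this U (IsNoetherian.noetherian U) hU
  intro U' hU'
  induction U', hU' using Submodule.fg_induction with
  | singleton y => exact fun hy => hρ.mem_cl_iff.1 ((span_singleton_le_iff_mem _ _).1 hy)
  | sup U₁ U₂ _ _ h₁ h₂ =>
    exact fun hle =>
      hρ.rank_sup_sup_eq (h₁ (le_sup_left.trans hle)) (h₂ (le_sup_right.trans hle))

theorem IsRkFn.rank_cl (hρ : IsRkFn F ρ) (V : Submodule F E) : ρ (cl ρ V) = ρ V := by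
  simpa [sup_eq_right.2 (hρ.le_cl V)] using hρ.rank_sup_eq_of_le_cl (le_refl (cl ρ V))

theorem IsRkFn.isFlat_cl (hρ : IsRkFn F ρ) (V : Submodule F E) : IsFlat ρ (cl ρ V) := by
  intro x hx
  rw [hρ.mem_cl_iff] at hx
  rw [hρ.rank_cl]
  have h₁ := hρ.mono (le_sup_left : V ≤ V ⊔ span F {x})
  have h₂ := hρ.mono (sup_le_sup_right (hρ.le_cl V) (span F {x}))
  omega

theorem IsRkFn.indep_of_le (hρ : IsRkFn F ρ) (h : W ≤ V) (hV : Indep ρ V) : Indep ρ W := by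
  obtain ⟨U, hU⟩ := Submodule.exists_isCompl W
  have hsup : W ⊔ U ⊓ V = V := by
    rw [← sup_inf_assoc_of_le U h, hU.sup_eq_top, top_inf_eq]
  have hinf : W ⊓ (U ⊓ V) = ⊥ :=
    eq_bot_iff.2 ((inf_le_inf_left W inf_le_left).trans hU.inf_eq_bot.le)
  have hdim := finrank_sup_add_finrank_inf_eq W (U ⊓ V)
  have hsub := hρ.submodular W (U ⊓ V)
  rw [hsup, hinf, finrank_bot] at hdim
  rw [hsup, hinf, hρ.rank_bot] at hsub
  have hW := hρ.le_finrank W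
  have hU' := hρ.le_finrank (U ⊓ V)
  unfold Indep at hV ⊢
  omega

theorem IsRkFn.indep_sup_span_singleton_iff (hρ : IsRkFn F ρ) (hW : Indep ρ W) (hx : x ∉ W) :
    Indep ρ (W ⊔ span F {x}) ↔ ρ W < ρ (W ⊔ span F {x}) := by
  have hdim := finrank_sup_span_singleton hx
  have hle := hρ.le_finrank (W ⊔ span F {x})
  unfold Indep at hW ⊢
  omega

theorem IsRkFn.exists_indep_le_rank_eq (hρ : IsRkFn F ρ) (V : Submodule F E) :
    ∃ W ≤ V, Indep ρ W ∧ ρ W = ρ V := by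
  obtain ⟨W, hmax⟩ :=
    exists_maximal_of_wellFoundedGT (fun W => W ≤ V ∧ Indep ρ W) ⟨⊥, bot_le, hρ.indep_bot⟩
  obtain ⟨hWV, hW⟩ := hmax.prop
  refine ⟨W, hWV, hW, ?_⟩
  have hVW : V ≤ cl ρ W := by
    intro x hxV
    by_cases hxW : x ∈ W
    · exact hρ.le_cl W hxW
    refine hρ.mem_cl_iff.2 (le_antisymm ?_ (hρ.mono le_sup_left))
    by_contra! hlt
    have hWx : W < W ⊔ span F {x} :=
      left_lt_sup.2 fun h => hxW ((span_singleton_le_iff_mem _ _).1 h)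
    exact hmax.not_prop_of_gt hWx ⟨sup_le hWV ((span_singleton_le_iff_mem _ _).2 hxV),
      (hρ.indep_sup_span_singleton_iff hW hxW).2 hlt⟩
  simpa [sup_eq_right.2 hWV] using (hρ.rank_sup_eq_of_le_cl hVW).symm

theorem exists_isCircuit_le_of_not_indep (hD : ¬ Indep ρ D) : ∃ C ≤ D, IsCircuit ρ C := by
  obtain ⟨C, hCD, hC⟩ := exists_minimal_le_of_wellFoundedLT (fun C => ¬ Indep ρ C) D hD
  exact ⟨C, hCD, hC.prop, fun D' hD' => not_not.1 (hC.not_prop_of_lt hD')⟩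

end FiniteDimensional

theorem mem_sup_of_le_sup_span_singleton (hC : C ≤ V ⊔ span F {x}) (hCV : ¬ C ≤ V) :
    x ∈ V ⊔ C := by
  rcases (wcovBy_span_singleton_sup x V).eq_or_eq le_sup_left
    (sup_le le_sup_right (hC.trans_eq (sup_comm _ _))) with h | h
  · exact absurd (sup_eq_left.1 h) hCV
  · exact h ▸ mem_sup_left (mem_span_singleton_self x)

theorem IsRkFn.exists_isCircuit_of_mem_cl [FiniteDimensional F E] (hρ : IsRkFn F ρ)
    (hxV : x ∉ V) (hx : x ∈ cl ρ V) :
    ∃ C, IsCircuit ρ C ∧ C ≤ V ⊔ span F {x} ∧ x ∈ V ⊔ C := by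
  obtain ⟨W, hWV, hW, hWρ⟩ := hρ.exists_indep_le_rank_eq V
  have hxW : x ∉ W := fun h => hxV (hWV h)
  have hdep : ¬ Indep ρ (W ⊔ span F {x}) := by
    rw [hρ.indep_sup_span_singleton_iff hW hxW, not_lt, hWρ, ← hρ.mem_cl_iff.1 hx]
    exact hρ.mono (sup_le_sup_right hWV _)
  obtain ⟨C, hCle, hC⟩ := exists_isCircuit_le_of_not_indep hdep
  have hCV : ¬ C ≤ V := fun hCV => by
    have hCW : C ≤ (W ⊔ span F {x}) ⊓ V := le_inf hCle hCV
    rw [sup_inf_assoc_of_le _ hWV, (disjoint_span_singleton_of_notMem hxV).symm.eq_bot,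
      sup_bot_eq] at hCW
    exact hC.1 (hρ.indep_of_le hCW hW)
  have hCle' := hCle.trans (sup_le_sup_right hWV _)
  exact ⟨C, hC, hCle', mem_sup_of_le_sup_span_singleton hCle' hCV⟩

theorem cyc_le (ρ : Submodule F E → ℕ) (V : Submodule F E) : cyc ρ V ≤ V :=
  sSup_le fun _ hC => hC.2

theorem isOpenSp_cyc (ρ : Submodule F E → ℕ) (V : Submodule F E) : IsOpenSp ρ (cyc ρ V) :=
  ⟨_, fun _ hC => hC.1, rfl⟩

theorem IsCircuit.le_cyc (hC : IsCircuit ρ C) (h : C ≤ V) : C ≤ cyc ρ V :=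
  le_sSup ⟨hC, h⟩

theorem IsOpenSp.le_cyc (hO : IsOpenSp ρ O) (h : O ≤ V) : O ≤ cyc ρ V := by
  obtain ⟨S, hS, rfl⟩ := hO
  exact sSup_le fun C hC => (hS C hC).le_cyc ((le_sSup hC).trans h)

theorem IsOpenSp.sup (hU : IsOpenSp ρ U) (hW : IsOpenSp ρ W) : IsOpenSp ρ (U ⊔ W) := by
  obtain ⟨S, hS, rfl⟩ := hU
  obtain ⟨T, hT, rfl⟩ := hW
  exact ⟨S ∪ T, fun C hC => hC.elim (hS C) (hT C), sSup_union.symm⟩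

theorem IsRkFn.isFlat_cyc [FiniteDimensional F E] (hρ : IsRkFn F ρ) (hV : IsFlat ρ V) :
    IsFlat ρ (cyc ρ V) := by
  intro x hx
  refine lt_of_le_of_ne (hρ.mono le_sup_left) fun heq => ?_
  by_cases hxV : x ∈ V
  · obtain ⟨C, hC, hCle, hxC⟩ := hρ.exists_isCircuit_of_mem_cl hx (hρ.mem_cl_iff.2 heq.symm)
    have hCcyc : C ≤ cyc ρ V :=
      hC.le_cyc (hCle.trans (sup_le (cyc_le ρ V) ((span_singleton_le_iff_mem _ _).2 hxV)))
    exact hx (sup_eq_left.2 hCcyc ▸ hxC)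
  · have hle := hρ.rank_sup_add_le (cyc_le ρ V) (span F {x})
    have hflat := hV x hxV
    omega

theorem IsRkFn.cl_eq_sup_cyc [FiniteDimensional F E] (hρ : IsRkFn F ρ) (V : Submodule F E) :
    cl ρ V = V ⊔ cyc ρ (cl ρ V) := by
  refine le_antisymm (fun x hx => ?_) (sup_le (hρ.le_cl V) (cyc_le ρ _))
  by_cases hxV : x ∈ V
  · exact mem_sup_left hxV
  obtain ⟨C, hC, hCle, hxC⟩ := hρ.exists_isCircuit_of_mem_cl hxV hx
  exact sup_le_sup_left (hC.le_cyc (hCle.trans (hρ.sup_span_singleton_le_cl hx))) V hxC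

theorem IsRkFn.isOpenSp_cl [FiniteDimensional F E] (hρ : IsRkFn F ρ) (hO : IsOpenSp ρ O) :
    IsOpenSp ρ (cl ρ O) :=
  hρ.cl_eq_sup_cyc O ▸ hO.sup (isOpenSp_cyc ρ _)

end QM

namespace QM

variable {F E : Type*} [Field F] [Fintype F] [AddCommGroup E] [Module F E]
  [FiniteDimensional F E]

theorem stmt6 (ρ : Submodule F E → ℕ) (hρ : IsRkFn F ρ) :
    (∀ Fl : Submodule F E, IsFlat ρ Fl → IsFlat ρ (cyc ρ Fl)) ∧
    (∀ O : Submodule F E, IsOpenSp ρ O → IsOpenSp ρ (cl ρ O)) ∧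
    (∀ V : Submodule F E, cl ρ (cyc ρ V) ≤ cyc ρ (cl ρ V) ∧
      CyclicFlat ρ (cl ρ (cyc ρ V)) ∧ CyclicFlat ρ (cyc ρ (cl ρ V))) := by
  refine ⟨fun Fl hFl => hρ.isFlat_cyc hFl, fun O hO => hρ.isOpenSp_cl hO, fun V => ?_⟩
  have hopen : IsOpenSp ρ (cl ρ (cyc ρ V)) := hρ.isOpenSp_cl (isOpenSp_cyc ρ V)
  exact ⟨hopen.le_cyc (hρ.cl_mono (cyc_le ρ V)), ⟨hρ.isFlat_cl _, hopen⟩,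
    hρ.isFlat_cyc (hρ.isFlat_cl V), isOpenSp_cyc ρ _⟩

end QM
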